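/- arXiv:2011.06018 — 3 statements merged into one kernel-verified Lean document; each statement's English description precedes it below -/
import Mathlib

section
/- Let I ⊆ ℝ be an open interval containing 0, let f₁, …, f_m : I → ℝ be real-analytic functions, and let g : I → ℝ be a continuous function such that for every t ∈ I one has g(t) ∈ {f₁(t), …, f_m(t)}. Then there exist indices a, b ∈ {1, …, m} and a real number η > 0 with (−η, η) ⊆ I such that g(t) = f_a(t) for all t ∈ [0, η) and g(t) = f_b(t) for all t ∈ (−η, 0]. -/
open Set Filter Topology

lemma right_branch
    (α β : ℝ) (hα : α < 0) (hβ : 0 < β)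
    (m : ℕ) (f : Fin m → ℝ → ℝ)
    (hf : ∀ i, ∀ t ∈ Set.Ioo α β, AnalyticAt ℝ (f i) t)
    (g : ℝ → ℝ) (hg : ContinuousOn g (Set.Ioo α β))
    (hval : ∀ t ∈ Set.Ioo α β, ∃ i, g t = f i t) :
    ∃ (a : Fin m) (η : ℝ), 0 < η ∧ Set.Ioo (-η) η ⊆ Set.Ioo α β ∧
      ∀ t ∈ Set.Ico 0 η, g t = f a t := by
  classical
  have h0 : (0:ℝ) ∈ Set.Ioo α β := ⟨hα, hβ⟩
  set R : Fin m → Fin m → Prop := fun i j => ∀ᶠ t in 𝓝 (0:ℝ), f i t = f j t with hR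
  -- dichotomy for each pair
  have hdich : ∀ i j, ∀ᶠ t in 𝓝[≠] (0:ℝ), (f i t = f j t ↔ R i j) := by
    intro i j
    rcases (hf i 0 h0).eventually_eq_or_eventually_ne (hf j 0 h0) with h | h
    · filter_upwards [h.filter_mono nhdsWithin_le_nhds] with t ht
      exact ⟨fun _ => h, fun _ => ht⟩
    · filter_upwards [h] with t ht
      constructor
      · intro he; exact absurd he ht
      · intro hr
        exfalso
        have := (h.and (hr.filter_mono nhdsWithin_le_nhds)).exists
        obtain ⟨x, hx1, hx2⟩ := this
        exact hx1 hx2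
  have hall : ∀ᶠ t in 𝓝[≠] (0:ℝ), ∀ i j, (f i t = f j t ↔ R i j) := by
    rw [eventually_all]; intro i; rw [eventually_all]; intro j; exact hdich i j
  have heq : ∀ᶠ t in 𝓝 (0:ℝ), ∀ i j, R i j → f i t = f j t := by
    rw [eventually_all]; intro i; rw [eventually_all]; intro j
    by_cases h : R i j
    · filter_upwards [h] with t ht _; exact ht
    · filter_upwards with t ht; exact absurd ht h
  have hmem : ∀ᶠ t in 𝓝 (0:ℝ), t ∈ Set.Ioo α β := (isOpen_Ioo).eventually_mem h0
  have hbig : ∀ᶠ t in 𝓝 (0:ℝ),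
      t ∈ Set.Ioo α β ∧ (∀ i j, R i j → f i t = f j t) ∧
      (t ≠ 0 → ∀ i j, (f i t = f j t ↔ R i j)) := by
    have := eventually_nhdsWithin_iff.mp hall
    filter_upwards [hmem, heq, this] with t h1 h2 h3
    exact ⟨h1, h2, h3⟩
  rw [Metric.eventually_nhds_iff] at hbig
  obtain ⟨η, hηpos, hη⟩ := hbig
  have habs : ∀ t : ℝ, t ∈ Set.Ioo (-η) η → t ∈ Set.Ioo α β ∧
      (∀ i j, R i j → f i t = f j t) ∧
      (t ≠ 0 → ∀ i j, (f i t = f j t ↔ R i j)) := by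
    intro t ht
    apply hη
    rw [Real.dist_eq, sub_zero, abs_lt]
    exact ⟨ht.1, ht.2⟩
  have hsub : Set.Ioo (-η) η ⊆ Set.Ioo α β := fun t ht => (habs t ht).1
  -- pick the branch at η/2
  have ht' : (η/2 : ℝ) ∈ Set.Ioo (-η) η := by constructor <;> nlinarith
  obtain ⟨a, ha⟩ := hval (η/2) (hsub ht')
  refine ⟨a, η, hηpos, hsub, ?_⟩
  -- claim on Ioo 0 η
  have key : ∀ t ∈ Set.Ioo (0:ℝ) η, g t = f a t := by
    intro t₀ ht₀
    set u := min t₀ (η/2) with hu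
    set v := max t₀ (η/2) with hv
    have hK : Set.Icc u v ⊆ Set.Ioo (0:ℝ) η := by
      intro x hx
      constructor
      · calc (0:ℝ) < u := lt_min ht₀.1 (by nlinarith)
          _ ≤ x := hx.1
      · calc x ≤ v := hx.2
          _ < η := max_lt ht₀.2 (by nlinarith)
    have hKsub : Set.Icc u v ⊆ Set.Ioo (-η) η := fun x hx =>
      ⟨by nlinarith [(hK hx).1], (hK hx).2⟩
    have hKab : Set.Icc u v ⊆ Set.Ioo α β := fun x hx => hsub (hKsub hx)
    -- closed sets
    have hclosed : ∀ j : Fin m, IsClosed {x ∈ Set.Icc u v | g x = f j x} := by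
      intro j
      have : {x ∈ Set.Icc u v | g x = f j x}
          = Set.Icc u v ∩ (fun x => g x - f j x) ⁻¹' {0} := by
        ext x; simp [sub_eq_zero]
      rw [this]
      apply ContinuousOn.preimage_isClosed_of_isClosed _ isClosed_Icc isClosed_singleton
      exact (hg.mono hKab).sub (fun x hx => ((hf j x (hKab hx)).continuousAt).continuousWithinAt)
    set Ca := {x ∈ Set.Icc u v | g x = f a x} with hCa
    set Cb := ⋃ j ∈ {j : Fin m | ¬ R a j}, {x ∈ Set.Icc u v | g x = f j x} with hCb
    have hCbclosed : IsClosed Cb := by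
      apply Set.Finite.isClosed_biUnion (Set.toFinite _)
      intro j _; exact hclosed j
    have hcover : Set.Icc u v ⊆ Ca ∪ Cb := by
      intro x hx
      obtain ⟨j, hj⟩ := hval x (hKab hx)
      by_cases hr : R a j
      · left
        refine ⟨hx, ?_⟩
        rw [hj, (habs x (hKsub hx)).2.1 a j hr]
      · right
        exact Set.mem_biUnion hr ⟨hx, hj⟩
    have hdisj : Ca ∩ Cb = ∅ := by
      ext x
      simp only [Set.mem_inter_iff, Set.mem_empty_iff_false, iff_false]
      rintro ⟨⟨hx, hga⟩, hxb⟩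
      rw [hCb] at hxb
      obtain ⟨-, j, hnr, hgj⟩ : (u ≤ x ∧ x ≤ v) ∧ ∃ j, ¬ R a j ∧ g x = f j x := by
        simpa using hxb
      have hne : x ≠ 0 := ne_of_gt (hK hx).1
      have := ((habs x (hKsub hx)).2.2 hne a j).mp (by rw [← hga, ← hgj])
      exact hnr this
    -- connectedness argument
    have hpre : IsPreconnected (Set.Icc u v) := isPreconnected_Icc
    by_contra hgt
    have ht₀Cb : t₀ ∈ Cb := by
      rcases hcover ⟨min_le_left _ _, le_max_left _ _⟩ with h | h
      · exact absurd h.2 hgt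
      · exact h
    have ht'Ca : (η/2) ∈ Ca := ⟨⟨min_le_right _ _, le_max_right _ _⟩, ha⟩
    obtain ⟨x, hx⟩ := hpre Cbᶜ Caᶜ hCbclosed.isOpen_compl (hclosed a).isOpen_compl
      (fun y hy => by
        by_cases h : y ∈ Cb
        · right
          intro hCa'
          have : y ∈ Ca ∩ Cb := ⟨hCa', h⟩
          rw [hdisj] at this; exact this
        · left; exact h)
      ⟨η/2, ⟨min_le_right _ _, le_max_right _ _⟩, fun h => by
        have : (η/2 : ℝ) ∈ Ca ∩ Cb := ⟨ht'Ca, h⟩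
        rw [hdisj] at this; exact this⟩
      ⟨t₀, ⟨min_le_left _ _, le_max_left _ _⟩, fun h => hgt h.2⟩
    rcases hcover hx.1 with h | h
    · exact hx.2.2 h
    · exact hx.2.1 h
  -- extend to 0
  intro t ht
  rcases eq_or_lt_of_le ht.1 with h | h
  · -- t = 0: use continuity
    subst h
    have hne : (𝓝[Set.Ioo (0:ℝ) η] (0:ℝ)).NeBot := by
      rw [← mem_closure_iff_nhdsWithin_neBot, closure_Ioo (ne_of_lt hηpos)]
      exact ⟨le_refl 0, le_of_lt hηpos⟩
    have h1 : Filter.Tendsto g (𝓝[Set.Ioo (0:ℝ) η] 0) (𝓝 (g 0)) := by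
      apply ((hg 0 h0).mono ?_).tendsto
      intro x hx; exact hsub ⟨by nlinarith [hx.1], hx.2⟩
    have h2 : Filter.Tendsto (f a) (𝓝[Set.Ioo (0:ℝ) η] 0) (𝓝 (f a 0)) :=
      ((hf a 0 h0).continuousAt.continuousWithinAt).tendsto
    have h3 : Filter.Tendsto g (𝓝[Set.Ioo (0:ℝ) η] 0) (𝓝 (f a 0)) := by
      apply h2.congr'
      filter_upwards [self_mem_nhdsWithin] with x hx
      exact (key x hx).symm
    exact tendsto_nhds_unique h1 h3
  · exact key t ⟨h, ht.2⟩

/-- Branch selection: a continuous function taking values among finitely many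
real-analytic branches on an open interval around `0` agrees with a single branch
on a right neighborhood of `0` and with a single branch on a left neighborhood of `0`. -/
theorem branch_selection
    (α β : ℝ) (hα : α < 0) (hβ : 0 < β)
    (m : ℕ) (f : Fin m → ℝ → ℝ)
    (hf : ∀ i, ∀ t ∈ Set.Ioo α β, AnalyticAt ℝ (f i) t)
    (g : ℝ → ℝ) (hg : ContinuousOn g (Set.Ioo α β))
    (hval : ∀ t ∈ Set.Ioo α β, ∃ i, g t = f i t) :
    ∃ (a b : Fin m) (η : ℝ), 0 < η ∧ Set.Ioo (-η) η ⊆ Set.Ioo α β ∧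
      (∀ t ∈ Set.Ico 0 η, g t = f a t) ∧
      (∀ t ∈ Set.Ioc (-η) 0, g t = f b t) := by
  obtain ⟨a, η₁, hη₁, hsub₁, hright⟩ := right_branch α β hα hβ m f hf g hg hval
  -- reflected data
  have hneg : ∀ s : ℝ, s ∈ Set.Ioo (-β) (-α) → (-s) ∈ Set.Ioo α β := by
    intro s hs; exact ⟨by linarith [hs.2], by linarith [hs.1]⟩
  obtain ⟨b, η₂, hη₂, hsub₂, hleft⟩ := right_branch (-β) (-α) (by linarith) (by linarith)
    m (fun i t => f i (-t))
    (fun i t ht => ((hf i (-t) (hneg t ht)).comp (analyticAt_id.neg)))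
    (fun t => g (-t))
    (hg.comp continuous_neg.continuousOn (fun s hs => hneg s hs))
    (fun t ht => hval (-t) (hneg t ht))
  refine ⟨a, b, min η₁ η₂, lt_min hη₁ hη₂, ?_, ?_, ?_⟩
  · intro x hx
    refine hsub₁ ⟨?_, lt_of_lt_of_le hx.2 (min_le_left _ _)⟩
    have h1 : -η₁ ≤ -(min η₁ η₂) := neg_le_neg (min_le_left _ _)
    linarith [hx.1]
  · intro t ht
    exact hright t ⟨ht.1, lt_of_lt_of_le ht.2 (min_le_left _ _)⟩
  · intro t ht
    have : (-t) ∈ Set.Ico (0:ℝ) η₂ := by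
      constructor
      · linarith [ht.2]
      · have h1 := ht.1
        have h2 : min η₁ η₂ ≤ η₂ := min_le_right _ _
        linarith
    have := hleft (-t) this
    simpa using this
end

section
/- Let I ⊆ ℝ be an open interval containing 0, let f₁, …, f_m : I → ℝ be real-analytic functions, and let g : I → ℝ be a continuous function such that for every t ∈ I one has g(t) ∈ {f₁(t), …, f_m(t)}. Then g has a right derivative and a left derivative at 0; that is, there exist real numbers d⁺ and d⁻ such that g has derivative d⁺ at 0 within the set [0, ∞) and derivative d⁻ at 0 within the set (−∞, 0]. Moreover, d⁺ = f_a′(0) and d⁻ = f_b′(0) for some indices a, b with f_a(0) = g(0) = f_b(0). -/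
open Set Filter Topology

/-- Key helper: on the right of `0`, the continuous selection `g` coincides with a single
analytic branch on a one-sided neighborhood `[0, ε)`. -/
lemma branch_eq_right (α β : ℝ) (hα : α < 0) (hβ : 0 < β)
    (m : ℕ) (f : Fin m → ℝ → ℝ)
    (hf : ∀ i, ∀ t ∈ Set.Ioo α β, AnalyticAt ℝ (f i) t)
    (g : ℝ → ℝ) (hg : ContinuousOn g (Set.Ioo α β))
    (hval : ∀ t ∈ Set.Ioo α β, ∃ i, g t = f i t) :
    ∃ a : Fin m, f a 0 = g 0 ∧ ∃ ε > 0, ∀ t ∈ Set.Ico 0 ε, g t = f a t := by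
  have h0 : (0 : ℝ) ∈ Ioo α β := ⟨hα, hβ⟩
  -- the dichotomy for each pair of branches
  set EQ : Fin m → Fin m → Prop := fun i j => ∀ᶠ t in 𝓝 (0 : ℝ), f i t = f j t with hEQdef
  have hdich : ∀ i j, ∀ᶠ t in 𝓝[≠] (0 : ℝ), (f i t = f j t ↔ EQ i j) := by
    intro i j
    rcases (hf i 0 h0).eventually_eq_or_eventually_ne (hf j 0 h0) with h | h
    · have hEQ : EQ i j := h
      filter_upwards [h.filter_mono nhdsWithin_le_nhds] with t ht
      simp [ht, hEQ]
    · have hne : ¬ EQ i j := by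
        intro hEQ
        have : ∀ᶠ t in 𝓝[≠] (0 : ℝ), False := by
          filter_upwards [h, hEQ.filter_mono nhdsWithin_le_nhds] with t h1 h2
          exact h1 h2
        exact this.exists.elim fun _ hf => hf
      filter_upwards [h] with t ht
      simp [ht, hne]
  have hall : ∀ᶠ t in 𝓝[≠] (0 : ℝ), ∀ i j, (f i t = f j t ↔ EQ i j) :=
    eventually_all.2 fun i => eventually_all.2 fun j => hdich i j
  -- extract a one-sided interval where the dichotomy holds
  rcases Metric.mem_nhdsWithin_iff.1 hall with ⟨ε₀, hε₀, hball⟩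
  set ε : ℝ := min ε₀ β with hεdef
  have hε : 0 < ε := lt_min hε₀ hβ
  have hUsub : ∀ t ∈ Ioo (0 : ℝ) ε, t ∈ Ioo α β := fun t ht =>
    ⟨lt_trans hα ht.1, lt_of_lt_of_le ht.2 (min_le_right _ _)⟩
  have hE : ∀ t ∈ Ioo (0 : ℝ) ε, ∀ i j, (f i t = f j t ↔ EQ i j) := by
    intro t ht i j
    refine hball ⟨?_, ht.1.ne'⟩ i j
    have : |t| < ε₀ := by
      rw [abs_of_pos ht.1]
      exact lt_of_lt_of_le ht.2 (min_le_left _ _)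
    simpa [Real.dist_eq] using this
  -- pick a base point and its branch
  have ht₀U : ε / 2 ∈ Ioo (0 : ℝ) ε := ⟨by linarith, by linarith⟩
  obtain ⟨a, ha⟩ := hval (ε / 2) (hUsub _ ht₀U)
  -- the open sets for the connectedness argument
  set W : Fin m → Set ℝ := fun i => Ioo α β ∩ (fun t => g t - f i t) ⁻¹' ({0}ᶜ) with hWdef
  have hWmem : ∀ i t, t ∈ W i ↔ t ∈ Ioo α β ∧ g t ≠ f i t := by
    intro i t
    simp [hWdef, sub_eq_zero]
  have hWopen : ∀ i, IsOpen (W i) := by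
    intro i
    have hfc : ContinuousOn (f i) (Ioo α β) := fun t ht =>
      (hf i t ht).continuousAt.continuousWithinAt
    exact (hg.sub hfc).isOpen_inter_preimage isOpen_Ioo isOpen_compl_singleton
  set u : Set ℝ := (⋂ i ∈ {i : Fin m | ¬ EQ i a}, W i) ∩ Ioo 0 ε with hudef
  set v : Set ℝ := W a ∩ Ioo 0 ε with hvdef
  have hu : IsOpen u :=
    ((Set.toFinite _).isOpen_biInter fun i _ => hWopen i).inter isOpen_Ioo
  have hv : IsOpen v := (hWopen a).inter isOpen_Ioo
  have hdisj : Disjoint u v := by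
    rw [Set.disjoint_left]
    rintro t ⟨htu, htU⟩ ⟨htv, -⟩
    have hgne : g t ≠ f a t := ((hWmem a t).1 htv).2
    obtain ⟨i, hgi⟩ := hval t (hUsub t htU)
    by_cases hiq : EQ i a
    · exact hgne (hgi.trans ((hE t htU i a).2 hiq))
    · exact ((hWmem i t).1 (Set.mem_iInter₂.1 htu i hiq)).2 hgi
  have hmemu : ∀ t ∈ Ioo (0 : ℝ) ε, g t = f a t → t ∈ u := by
    intro t htU hgt
    refine ⟨Set.mem_iInter₂.2 fun i hib => ?_, htU⟩
    refine (hWmem i t).2 ⟨hUsub t htU, ?_⟩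
    intro hgi
    exact hib ((hE t htU i a).1 (by rw [← hgi, ← hgt]))
  have hcover : Ioo (0 : ℝ) ε ⊆ u ∪ v := by
    intro t htU
    by_cases hgt : g t = f a t
    · exact Or.inl (hmemu t htU hgt)
    · exact Or.inr ⟨(hWmem a t).2 ⟨hUsub t htU, hgt⟩, htU⟩
  have hne : (Ioo (0 : ℝ) ε ∩ u).Nonempty := ⟨ε / 2, ht₀U, hmemu _ ht₀U ha⟩
  have hsub : Ioo (0 : ℝ) ε ⊆ u :=
    isPreconnected_Ioo.subset_left_of_subset_union hu hv hdisj hcover hne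
  -- `g` coincides with `f a` on `(0, ε)`
  have heq : ∀ t ∈ Ioo (0 : ℝ) ε, g t = f a t := by
    intro t htU
    obtain ⟨htu, -⟩ := hsub htU
    obtain ⟨i, hgi⟩ := hval t (hUsub t htU)
    by_cases hiq : EQ i a
    · exact hgi.trans ((hE t htU i a).2 hiq)
    · exact absurd hgi ((hWmem i t).1 (Set.mem_iInter₂.1 htu i hiq)).2
  -- `g 0 = f a 0` by continuity
  have hIooMem : Ioo (0 : ℝ) ε ∈ 𝓝[>] (0 : ℝ) := Ioo_mem_nhdsGT_of_mem ⟨le_refl _, hε⟩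
  have hev : ∀ᶠ t in 𝓝[>] (0 : ℝ), g t = f a t := by
    filter_upwards [hIooMem] with t ht using heq t ht
  have hga : Tendsto g (𝓝[>] (0 : ℝ)) (𝓝 (g 0)) :=
    (hg 0 h0).tendsto.mono_left
      (nhdsWithin_le_of_mem (mem_nhdsWithin_of_mem_nhds (Ioo_mem_nhds hα hβ)))
  have hfa : Tendsto (f a) (𝓝[>] (0 : ℝ)) (𝓝 (f a 0)) :=
    (hf a 0 h0).continuousAt.tendsto.mono_left nhdsWithin_le_nhds
  have hga' : Tendsto g (𝓝[>] (0 : ℝ)) (𝓝 (f a 0)) := hfa.congr' (hev.mono fun t ht => ht.symm)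
  have h00 : f a 0 = g 0 := tendsto_nhds_unique hga' hga
  refine ⟨a, h00, ε, hε, fun t ht => ?_⟩
  rcases eq_or_lt_of_le ht.1 with h | h
  · rw [← h]; exact h00.symm
  · exact heq t ⟨h, ht.2⟩

/-- A continuous function taking values among finitely many real-analytic branches on
an open interval around `0` has one-sided derivatives at `0`, each equal to the
derivative of a branch agreeing with it at `0`. -/
theorem one_sided_derivatives_of_branches
    (α β : ℝ) (hα : α < 0) (hβ : 0 < β)
    (m : ℕ) (f : Fin m → ℝ → ℝ)
    (hf : ∀ i, ∀ t ∈ Set.Ioo α β, AnalyticAt ℝ (f i) t)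
    (g : ℝ → ℝ) (hg : ContinuousOn g (Set.Ioo α β))
    (hval : ∀ t ∈ Set.Ioo α β, ∃ i, g t = f i t) :
    ∃ dplus dminus : ℝ,
      HasDerivWithinAt g dplus (Set.Ici 0) 0 ∧
      HasDerivWithinAt g dminus (Set.Iic 0) 0 ∧
      ∃ a b : Fin m,
        dplus = deriv (f a) 0 ∧ dminus = deriv (f b) 0 ∧
        f a 0 = g 0 ∧ f b 0 = g 0 := by
  have h0 : (0 : ℝ) ∈ Ioo α β := ⟨hα, hβ⟩
  -- right side
  obtain ⟨a, ha0, ε, hε, hright⟩ := branch_eq_right α β hα hβ m f hf g hg hval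
  -- left side: apply the helper to the reflected functions
  have hmaps : ∀ t ∈ Ioo (-β) (-α), -t ∈ Ioo α β := fun t ht =>
    ⟨by linarith [ht.2], by linarith [ht.1]⟩
  have hf' : ∀ i, ∀ t ∈ Set.Ioo (-β) (-α), AnalyticAt ℝ (fun s => f i (-s)) t := by
    intro i t ht
    exact (hf i (-t) (hmaps t ht)).comp analyticAt_id.neg
  have hg' : ContinuousOn (fun s => g (-s)) (Set.Ioo (-β) (-α)) :=
    hg.comp continuous_neg.continuousOn fun t ht => hmaps t ht
  have hval' : ∀ t ∈ Set.Ioo (-β) (-α), ∃ i, g (-t) = f i (-t) := fun t ht =>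
    hval (-t) (hmaps t ht)
  obtain ⟨b, hb0', δ, hδ, hleftraw⟩ :=
    branch_eq_right (-β) (-α) (by linarith) (by linarith) m (fun i s => f i (-s))
      hf' (fun s => g (-s)) hg' hval'
  have hb0 : f b 0 = g 0 := by simpa using hb0'
  have hleft : ∀ t ∈ Set.Ioc (-δ) 0, g t = f b t := by
    intro t ht
    have := hleftraw (-t) ⟨by linarith [ht.2], by linarith [ht.1]⟩
    simpa using this
  -- derivatives of the branches
  have hda : HasDerivAt (f a) (deriv (f a) 0) 0 :=
    ((hf a 0 h0).differentiableAt).hasDerivAt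
  have hdb : HasDerivAt (f b) (deriv (f b) 0) 0 :=
    ((hf b 0 h0).differentiableAt).hasDerivAt
  have hIco : Set.Ico (0 : ℝ) ε ∈ 𝓝[Set.Ici 0] (0 : ℝ) := by
    rw [← Set.Ici_inter_Iio]
    exact inter_mem self_mem_nhdsWithin (mem_nhdsWithin_of_mem_nhds (Iio_mem_nhds hε))
  have hIoc : Set.Ioc (-δ) (0 : ℝ) ∈ 𝓝[Set.Iic 0] (0 : ℝ) := by
    rw [← Set.Ioi_inter_Iic]
    exact inter_mem (mem_nhdsWithin_of_mem_nhds (Ioi_mem_nhds (by linarith)))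
      self_mem_nhdsWithin
  have hevr : g =ᶠ[𝓝[Set.Ici 0] (0 : ℝ)] f a := by
    filter_upwards [hIco] with t ht using hright t ht
  have hevl : g =ᶠ[𝓝[Set.Iic 0] (0 : ℝ)] f b := by
    filter_upwards [hIoc] with t ht using hleft t ht
  refine ⟨deriv (f a) 0, deriv (f b) 0, ?_, ?_, a, b, rfl, rfl, ha0, hb0⟩
  · exact (hda.hasDerivWithinAt).congr_of_eventuallyEq hevr ha0.symm
  · exact (hdb.hasDerivWithinAt).congr_of_eventuallyEq hevl hb0.symm
end

section
/- Let I ⊆ ℝ be an open interval, let f₁, …, f_m : I → ℝ be differentiable functions, let t₀ ∈ I, and define g(t) = max{f₁(t), …, f_m(t)} for t ∈ I. Let S = {i : f_i(t₀) = g(t₀)} be the active index set at t₀. Then g has derivative max{f_i′(t₀) : i ∈ S} at t₀ within the set [t₀, ∞), and g has derivative min{f_i′(t₀) : i ∈ S} at t₀ within the set (−∞, t₀]. -/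
/-!
Near `t₀` the inactive branches stay strictly below the active ones, so `g` is locally the
maximum of the active branches, which all pass through `(t₀, g t₀)`. For `t ≥ t₀` each active
`f i t` is `g t₀ + (t - t₀) f'ᵢ + o(t - t₀)`, and `(t - t₀) f'ᵢ` is largest for the largest
slope, so the maximum is squeezed between that branch and `g t₀ + (t - t₀) max f'ᵢ` plus the
sum of all remainders. For `t ≤ t₀` the factor `t - t₀` is nonpositive and the smallest slope
wins instead.
-/

open Filter Asymptotics Topology

namespace Finset

variable {ι : Type*}

lemma eventually_sup'_eq_sup'_of_lt {X α : Type*} [TopologicalSpace X] [LinearOrder α]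
    [TopologicalSpace α] [OrderClosedTopology α] {s t : Finset ι} (hs : s.Nonempty)
    (ht : t.Nonempty) (hts : t ⊆ s) {f : ι → X → α} {x₀ : X}
    (hf : ∀ i ∈ s, ContinuousAt (f i) x₀) (hlt : ∀ i ∈ s, i ∉ t → ∃ j ∈ t, f i x₀ < f j x₀) :
    ∀ᶠ x in 𝓝 x₀, s.sup' hs (f · x) = t.sup' ht (f · x) := by
  have hbelow : ∀ i ∈ s, ∀ᶠ x in 𝓝 x₀, i ∉ t → ∃ j ∈ t, f i x < f j x := by
    intro i hi
    by_cases hit : i ∈ t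
    · exact .of_forall fun _ h => absurd hit h
    obtain ⟨j, hj, hij⟩ := hlt i hi hit
    filter_upwards [(hf i hi).eventually_lt (hf j (hts hj)) hij] with x hx _ using ⟨j, hj, hx⟩
  filter_upwards [(s.eventually_all).2 hbelow] with x hx
  refine le_antisymm (sup'_le hs _ fun i hi => ?_) (sup'_mono _ hts ht)
  by_cases hit : i ∈ t
  · exact le_sup' (f · x) hit
  · obtain ⟨j, hj, hij⟩ := hx i hi hit
    exact hij.le.trans (le_sup' (f · x) hj)

lemma abs_sup'_sub_le_sum_abs (s : Finset ι) (hs : s.Nonempty) (x a : ι → ℝ) (c : ℝ) {k : ι}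
    (hk : k ∈ s) (ha : ∀ i ∈ s, a i ≤ a k) :
    |s.sup' hs x - c - a k| ≤ ∑ i ∈ s, |x i - c - a i| := by
  have hterm : ∀ i ∈ s, |x i - c - a i| ≤ ∑ j ∈ s, |x j - c - a j| :=
    fun i hi => single_le_sum (fun j _ => abs_nonneg (x j - c - a j)) hi
  obtain ⟨j, hj, hxj⟩ := s.exists_mem_eq_sup' hs x
  have hxk : x k ≤ s.sup' hs x := le_sup' x hk
  rw [abs_le]
  constructor
  · linarith [neg_abs_le (x k - c - a k), hterm k hk]
  · linarith [le_abs_self (x j - c - a j), hterm j hj, ha j hj]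

variable {s : Finset ι} (hs : s.Nonempty) {f : ι → ℝ → ℝ} {f' : ι → ℝ} {t₀ c : ℝ}

theorem hasDerivWithinAt_sup'_of_forall_le {u : Set ℝ} (hf : ∀ i ∈ s, HasDerivAt (f i) (f' i) t₀)
    (hc : ∀ i ∈ s, f i t₀ = c) {k : ι} (hk : k ∈ s)
    (hdom : ∀ t ∈ u, ∀ i ∈ s, (t - t₀) * f' i ≤ (t - t₀) * f' k) :
    HasDerivWithinAt (fun t => s.sup' hs (f · t)) (f' k) u t₀ := by
  have hc' : s.sup' hs (f · t₀) = c := (sup'_congr hs rfl hc).trans (sup'_const hs c)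
  have hrem : (fun t => ∑ i ∈ s, |f i t - c - (t - t₀) * f' i|) =o[𝓝[u] t₀] (· - t₀) := by
    refine IsLittleO.fun_sum fun i hi => isLittleO_abs_left.2 ?_
    have := (hasDerivAt_iff_isLittleO.1 (hf i hi)).mono (nhdsWithin_le_nhds (s := u))
    simpa only [hc i hi, smul_eq_mul] using this
  rw [hasDerivWithinAt_iff_isLittleO, hc']
  refine (IsBigO.of_bound' ?_).trans_isLittleO hrem
  filter_upwards [self_mem_nhdsWithin] with t ht
  rw [Real.norm_eq_abs, Real.norm_of_nonneg (sum_nonneg fun i _ => abs_nonneg _), smul_eq_mul]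
  exact abs_sup'_sub_le_sum_abs s hs _ (fun i => (t - t₀) * f' i) c hk (hdom t ht)

theorem hasDerivWithinAt_sup'_Ici (hf : ∀ i ∈ s, HasDerivAt (f i) (f' i) t₀)
    (hc : ∀ i ∈ s, f i t₀ = c) :
    HasDerivWithinAt (fun t => s.sup' hs (f · t)) (s.sup' hs f') (Set.Ici t₀) t₀ := by
  obtain ⟨k, hk, hkmax⟩ := s.exists_mem_eq_sup' hs f'
  rw [hkmax]
  refine hasDerivWithinAt_sup'_of_forall_le hs hf hc hk fun t ht i hi => ?_
  exact mul_le_mul_of_nonneg_left (hkmax ▸ le_sup' f' hi) (sub_nonneg.2 ht)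

theorem hasDerivWithinAt_sup'_Iic (hf : ∀ i ∈ s, HasDerivAt (f i) (f' i) t₀)
    (hc : ∀ i ∈ s, f i t₀ = c) :
    HasDerivWithinAt (fun t => s.sup' hs (f · t)) (s.inf' hs f') (Set.Iic t₀) t₀ := by
  obtain ⟨k, hk, hkmin⟩ := s.exists_mem_eq_inf' hs f'
  rw [hkmin]
  refine hasDerivWithinAt_sup'_of_forall_le hs hf hc hk fun t ht i hi => ?_
  exact mul_le_mul_of_nonpos_left (hkmin ▸ inf'_le f' hi) (sub_nonpos.2 ht)

end Finset

open Finset in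
/-- One-sided differentiation rule for a pointwise maximum of finitely many
differentiable branches on an open interval: only the branches attaining the maximum
at `t₀` contribute. The right derivative at `t₀` is the maximum of the derivatives of
the active branches, and the left derivative is their minimum. -/
theorem hasDerivWithinAt_max_active
    (α β : ℝ) (m : ℕ) [NeZero m] (f : Fin m → ℝ → ℝ)
    (hdiff : ∀ i, ∀ t ∈ Set.Ioo α β, DifferentiableAt ℝ (f i) t)
    (t₀ : ℝ) (ht₀ : t₀ ∈ Set.Ioo α β)
    (g : ℝ → ℝ)
    (hg : ∀ t ∈ Set.Ioo α β,
      g t = Finset.univ.sup' Finset.univ_nonempty fun i => f i t) :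
    HasDerivWithinAt g
        (sSup {d : ℝ | ∃ i, f i t₀ = g t₀ ∧ d = deriv (f i) t₀})
        (Set.Ici t₀) t₀ ∧
    HasDerivWithinAt g
        (sInf {d : ℝ | ∃ i, f i t₀ = g t₀ ∧ d = deriv (f i) t₀})
        (Set.Iic t₀) t₀ := by
  classical
  set A := univ.filter fun i => f i t₀ = g t₀
  obtain ⟨j, -, hj⟩ := univ.exists_mem_eq_sup' univ_nonempty (f · t₀)
  have hgj : g t₀ = f j t₀ := (hg t₀ ht₀).trans hj
  have hA : A.Nonempty := ⟨j, by simp [A, hgj]⟩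
  have hinactive : ∀ i ∈ univ, i ∉ A → ∃ k ∈ A, f i t₀ < f k t₀ := fun i _ hi =>
    ⟨j, by simp [A, hgj], lt_of_le_of_ne (hgj ▸ hg t₀ ht₀ ▸ le_sup' (f · t₀) (mem_univ i))
      fun h => hi (by simp [A, h, hgj])⟩
  have hloc : g =ᶠ[𝓝 t₀] fun t => A.sup' hA (f · t) := by
    filter_upwards [Ioo_mem_nhds ht₀.1 ht₀.2, eventually_sup'_eq_sup'_of_lt univ_nonempty hA
      (subset_univ A) (fun i _ => (hdiff i t₀ ht₀).continuousAt) hinactive] with t ht hsup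
    rw [hg t ht, hsup]
  have hset : {d : ℝ | ∃ i, f i t₀ = g t₀ ∧ d = deriv (f i) t₀} =
      (fun i => deriv (f i) t₀) '' A := by
    ext d
    simp [A, eq_comm (a := d)]
  have hd : ∀ i ∈ A, HasDerivAt (f i) (deriv (f i) t₀) t₀ := fun i _ => (hdiff i t₀ ht₀).hasDerivAt
  have hc : ∀ i ∈ A, f i t₀ = g t₀ := fun i hi => (mem_filter.1 hi).2
  rw [hset, ← sup'_eq_csSup_image _ hA, ← inf'_eq_csInf_image _ hA]
  exact ⟨(hasDerivWithinAt_sup'_Ici hA hd hc).congr_of_eventuallyEq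
      (nhdsWithin_le_nhds hloc) hloc.eq_of_nhds,
    (hasDerivWithinAt_sup'_Iic hA hd hc).congr_of_eventuallyEq
      (nhdsWithin_le_nhds hloc) hloc.eq_of_nhds⟩
end
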